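/- arXiv:math/0202292 — 2 statements merged into one kernel-verified Lean document; each statement's English description precedes it below -/
import Mathlib

section
/- Fix $N\ge 2$ and $q\in\mathbb{C}^\times$ not a root of unity. For $m\ne0$ set $s_{|m|}=(1+q^{2|m|}+\cdots+q^{2(N-1)|m|})^{1/2}$ (a fixed square root) and define $a_{Nm}=q^{Nm+|m|/2}\big(\frac{|m|}{m}\,\frac{\ep_{1m}+q^{|m|}\ep_{2m}+\cdots+q^{(N-1)|m|}\ep_{Nm}}{s_{|m|}}+\ep_{Nm}\big)$ in the Heisenberg algebra with $[\ep_{im},\ep_{jn}]=\frac{[m]}{m}[mc]\delta_{ij}\delta_{m,-n}$. Then $[a_{Nm},a_{Nn}]=0$ for all nonzero $m,n$. -/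
/-! Write `a_{Nm} = c_m (α_m P_m + ε_{Nm})` with `α_m = sign m / s_{|m|}` and
`P_m = ∑ₖ q^{k|m|} ε_{k+1,m}`. Only `n = -m` gives a nonzero bracket, and there `α_{-m} = -α_m`
while `P_{-m}` has the same coefficients as `P_m`. Hence the two cross terms `α_m [P_m, ε_{N,-m}]`
and `-α_m [ε_{Nm}, P_{-m}]` cancel, and the rest is `(1 - α_m² ∑ₖ q^{2k|m|}) [ε_{Nm}, ε_{N,-m}]`,
which vanishes because `s_{|m|}² = ∑ₖ q^{2k|m|}` and `sign m ² = 1`. -/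

open Finset

theorem Int.cast_sign_sq {R : Type*} [Ring R] {m : ℤ} (hm : m ≠ 0) : (m.sign : R) ^ 2 = 1 := by
  rw [← Int.cast_pow, ← Int.natAbs_sq, Int.natAbs_sign_of_ne_zero hm]
  norm_num

theorem zpow_natCast_mul_natCast_sq {G₀ : Type*} [GroupWithZero G₀] (q : G₀) (k n : ℕ) :
    (q ^ ((k : ℤ) * (n : ℤ))) ^ 2 = q ^ (2 * k * n) := by
  rw [← Nat.cast_mul, zpow_natCast, ← pow_mul, mul_comm, mul_assoc]

section OrthogonalFamilies

variable {R L ι : Type*} [CommRing R] [LieRing L] [LieAlgebra R L] [DecidableEq ι]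
  {e f : ι → L} {B : R} {K : L}

theorem lie_sum_smul_sum_smul (hef : ∀ i j, ⁅e i, f j⁆ = (if i = j then B else 0) • K)
    (S : Finset ι) (x y : ι → R) :
    ⁅∑ i ∈ S, x i • e i, ∑ j ∈ S, y j • f j⁆ = ((∑ i ∈ S, x i * y i) * B) • K := by
  simp only [sum_lie, lie_sum, smul_lie, lie_smul, hef, smul_smul, ← sum_smul, mul_ite, mul_zero]
  rw [sum_mul]
  refine congrArg (· • K) (sum_congr rfl fun i hi => ?_)
  rw [sum_ite_eq', if_pos hi]
  ring

theorem lie_smul_sum_add_neg_smul_sum_add (hef : ∀ i j, ⁅e i, f j⁆ = (if i = j then B else 0) • K)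
    {E F : L} (hEF : ⁅E, F⁆ = B • K) (hcross : ∀ i, ⁅e i, F⁆ = ⁅E, f i⁆)
    (S : Finset ι) (w : ι → R) (α : R) :
    ⁅α • ∑ i ∈ S, w i • e i + E, -α • ∑ i ∈ S, w i • f i + F⁆
      = ((1 - α ^ 2 * ∑ i ∈ S, w i ^ 2) * B) • K := by
  have hP : ⁅∑ i ∈ S, w i • e i, F⁆ = ⁅E, ∑ i ∈ S, w i • f i⁆ := by
    simp only [sum_lie, lie_sum, smul_lie, lie_smul, hcross]
  rw [add_lie, lie_add, lie_add, smul_lie, lie_smul, lie_smul, smul_lie, lie_sum_smul_sum_smul hef,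
    hP, hEF]
  simp only [← sq]
  module

end OrthogonalFamilies

theorem stmt15_general (N : ℕ) (L : Type*) [LieRing L] [LieAlgebra ℂ L]
    (q t qc : ℂ)
    (K : L)
    (e : ℕ → ℤ → L)
    (hrel : ∀ (i j : ℕ) (m n : ℤ),
      ⁅e i m, e j n⁆ = (if i = j ∧ n = -m then
          (q ^ m - q ^ (-m)) / (q - q⁻¹) / (m : ℂ)
            * ((qc ^ m - qc ^ (-m)) / (q - q⁻¹)) else 0) • K)
    (s : ℕ → ℂ) (hs0 : ∀ k, s k ≠ 0)
    (hs : ∀ k : ℕ, s k ^ 2 = ∑ j ∈ Finset.range N, q ^ (2 * j * k))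
    (aN : ℤ → L)
    (haN : ∀ m : ℤ, aN m = (q ^ ((N : ℤ) * m) * t ^ (m.natAbs : ℤ)) •
        (((m.sign : ℂ) / s m.natAbs) •
            (∑ k ∈ Finset.range N, q ^ ((k : ℤ) * (m.natAbs : ℤ)) • e (k + 1) m)
          + e N m)) :
    ∀ m n : ℤ, m ≠ 0 → n ≠ 0 → ⁅aN m, aN n⁆ = 0 := by
  intro m n hm _
  rw [haN, haN, smul_lie, lie_smul]
  by_cases hmn : n = -m
  · subst hmn
    set B := (q ^ m - q ^ (-m)) / (q - q⁻¹) / (m : ℂ) * ((qc ^ m - qc ^ (-m)) / (q - q⁻¹))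
    have hpair (i j : ℕ) :
        ⁅e (i + 1) m, e (j + 1) (-m)⁆ = (if i = j then B else 0) • K := by
      simp [hrel, B]
    have hEF : ⁅e N m, e N (-m)⁆ = B • K := by simp [hrel, B]
    have hcross (i : ℕ) : ⁅e (i + 1) m, e N (-m)⁆ = ⁅e N m, e (i + 1) (-m)⁆ := by
      simp only [hrel, eq_comm (a := i + 1)]
    have hnorm : ((m.sign : ℂ) / s m.natAbs) ^ 2 *
        ∑ k ∈ range N, (q ^ ((k : ℤ) * (m.natAbs : ℤ))) ^ 2 = 1 := by
      simp only [zpow_natCast_mul_natCast_sq, ← hs, div_pow, Int.cast_sign_sq hm]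
      exact one_div_mul_cancel (pow_ne_zero 2 (hs0 _))
    rw [Int.sign_neg, Int.natAbs_neg, Int.cast_neg, neg_div,
      lie_smul_sum_add_neg_smul_sum_add (e := fun i => e (i + 1) m) hpair hEF hcross, hnorm,
      sub_self, zero_mul, zero_smul, smul_zero, smul_zero]
  · simp [hrel, hmn, sum_lie, lie_sum]

/-- With `a_{Nm} = q^{Nm+|m|/2}( (|m|/m)·(ε_{1m} + q^{|m|}ε_{2m} + ⋯ + q^{(N-1)|m|}ε_{Nm})/s_{|m|}
+ ε_{Nm})` in the Heisenberg algebra `[ε_{im}, ε_{jn}] = ([m]/m)[mc] δ_{ij} δ_{m,-n}`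
(with `t = q^{1/2}`, `s_{|m|}² = 1 + q^{2|m|} + ⋯ + q^{2(N-1)|m|}`), one has
`[a_{Nm}, a_{Nn}] = 0` for all nonzero `m, n`. -/
theorem stmt15 (N : ℕ) (hN : 2 ≤ N) (L : Type*) [LieRing L] [LieAlgebra ℂ L]
    (q t qc : ℂ) (hq0 : q ≠ 0) (ht : t ≠ 0) (hqt : q = t ^ 2)
    (hroot : ∀ k : ℕ, 0 < k → q ^ k ≠ 1)
    (K : L) (hK : ∀ x : L, ⁅K, x⁆ = 0)
    (e : ℕ → ℤ → L)
    (hrel : ∀ (i j : ℕ) (m n : ℤ),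
      ⁅e i m, e j n⁆ = (if i = j ∧ n = -m then
          (q ^ m - q ^ (-m)) / (q - q⁻¹) / (m : ℂ)
            * ((qc ^ m - qc ^ (-m)) / (q - q⁻¹)) else 0) • K)
    (s : ℕ → ℂ) (hs0 : ∀ k, s k ≠ 0)
    (hs : ∀ k : ℕ, s k ^ 2 = ∑ j ∈ Finset.range N, q ^ (2 * j * k))
    (aN : ℤ → L)
    (haN : ∀ m : ℤ, aN m = (q ^ ((N : ℤ) * m) * t ^ (m.natAbs : ℤ)) •
        (((m.sign : ℂ) / s m.natAbs) •
            (∑ k ∈ Finset.range N, q ^ ((k : ℤ) * (m.natAbs : ℤ)) • e (k + 1) m)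
          + e N m)) :
    ∀ m n : ℤ, m ≠ 0 → n ≠ 0 → ⁅aN m, aN n⁆ = 0 :=
  stmt15_general N L q t qc K e hrel s hs0 hs aN haN
end

section
/- In the setting of the previous Heisenberg algebra, with $\oh_{im}=q^{im}(q^{|m|/2}\ep_{im}-q^{-|m|/2}\ep_{i+1,m})$ for $1\le i\le N-1$ and $a_{Nm}$ as defined there, one has $[\oh_{im}, a_{Nn}] = -\delta_{i,N-1}\,\frac{q^{-m}}{m}[m][mc]\,\delta_{m,-n}$ for all $1\le i\le N-1$ and nonzero integers $m,n$. -/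
/-!
Only the pairings of `ε_{k,m}` with `ε_{k,-m}` are nonzero, so `[h̄_{im}, a_{Nn}]` vanishes
unless `n = -m`. In that case the sum part of `a_{N,-m}` pairs with `ε_{i,m}` and `ε_{i+1,m}` to
contributions proportional to `q^{|m|/2} q^{(i-1)|m|}` and `q^{-|m|/2} q^{i|m|}`, which are equal
and cancel. What remains is the pairing of `-q^{-|m|/2} ε_{i+1,m}` with the lone `ε_{N,-m}`,
present only when `i + 1 = N`.
-/

section HeisenbergBracket

variable {R L : Type*} [CommRing R] [LieRing L] [LieAlgebra R L]
  {e : ℕ → ℤ → L} {K : L} {c : ℤ → R}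

theorem lie_sum_smul_succ
    (hrel : ∀ i j m n, ⁅e i m, e j n⁆ = (if i = j ∧ n = -m then c m else 0) • K)
    {N j : ℕ} (hj : j < N) (m n : ℤ) (b : ℕ → R) :
    ⁅e (j + 1) m, ∑ k ∈ Finset.range N, b k • e (k + 1) n⁆ =
      (if n = -m then b j * c m else 0) • K := by
  simp only [lie_sum, lie_smul, hrel, smul_smul, ← Finset.sum_smul]
  split_ifs with hnm
  · simp [hnm, hj]
  · simp [hnm]

theorem lie_smul_sum_smul_succ_add
    (hrel : ∀ i j m n, ⁅e i m, e j n⁆ = (if i = j ∧ n = -m then c m else 0) • K)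
    {N j : ℕ} (hj : j < N) (m n : ℤ) (α β : R) (b : ℕ → R) :
    ⁅e (j + 1) m, α • (β • ∑ k ∈ Finset.range N, b k • e (k + 1) n + e N n)⁆ =
      (if n = -m then α * (β * b j + if j + 1 = N then 1 else 0) * c m else 0) • K := by
  rw [lie_smul, lie_add, lie_smul, lie_sum_smul_succ hrel hj, hrel, ite_and]
  split_ifs <;> module

theorem smul_sub_smul_lie_smul_sum_smul_succ_add
    (hrel : ∀ i j m n, ⁅e i m, e j n⁆ = (if i = j ∧ n = -m then c m else 0) • K)
    {N j : ℕ} (hj : j + 1 < N) (m n : ℤ) (γ u v α β : R) (b : ℕ → R) :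
    ⁅γ • (u • e (j + 1) m - v • e (j + 2) m),
        α • (β • ∑ k ∈ Finset.range N, b k • e (k + 1) n + e N n)⁆ =
      (if n = -m then
        γ * α * (β * (u * b j - v * b (j + 1)) - if j + 2 = N then v else 0) * c m
      else 0) • K := by
  rw [smul_lie, sub_lie, smul_lie, smul_lie, lie_smul_sum_smul_succ_add hrel (by omega),
    lie_smul_sum_smul_succ_add hrel hj, if_neg (by omega : j + 1 ≠ N)]
  split_ifs <;> module

end HeisenbergBracket

theorem zpow_mul_zpow_eq_of_eq_sq {F : Type*} [Field F] {q t : F} (ht : t ≠ 0) (hq : q = t ^ 2)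
    (a k : ℤ) : t ^ a * q ^ (k * a) = t ^ (-a) * q ^ ((k + 1) * a) := by
  simp only [hq, ← zpow_natCast, ← zpow_mul, ← zpow_add₀ ht]
  congr 1
  push_cast
  ring

theorem stmt16_general (N : ℕ) (L : Type*) [LieRing L] [LieAlgebra ℂ L]
    (q t qc : ℂ) (ht : t ≠ 0) (hqt : q = t ^ 2)
    (K : L)
    (e : ℕ → ℤ → L)
    (hrel : ∀ (i j : ℕ) (m n : ℤ),
      ⁅e i m, e j n⁆ = (if i = j ∧ n = -m then
          (q ^ m - q ^ (-m)) / (q - q⁻¹) / (m : ℂ)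
            * ((qc ^ m - qc ^ (-m)) / (q - q⁻¹)) else 0) • K)
    (s : ℕ → ℂ)
    (aN : ℤ → L)
    (haN : ∀ m : ℤ, aN m = (q ^ ((N : ℤ) * m) * t ^ (m.natAbs : ℤ)) •
        (((m.sign : ℂ) / s m.natAbs) •
            (∑ k ∈ Finset.range N, q ^ ((k : ℤ) * (m.natAbs : ℤ)) • e (k + 1) m)
          + e N m))
    (oh : ℕ → ℤ → L)
    (hoh : ∀ (i : ℕ) (m : ℤ), oh i m = q ^ ((i : ℤ) * m) •
        (t ^ (m.natAbs : ℤ) • e i m - t ^ (-(m.natAbs : ℤ)) • e (i + 1) m)) :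
    ∀ i : ℕ, 1 ≤ i → i ≤ N - 1 → ∀ m n : ℤ, m ≠ 0 → n ≠ 0 →
      ⁅oh i m, aN n⁆ = (if i = N - 1 ∧ n = -m then
          -(q ^ (-m) / (m : ℂ)) * ((q ^ m - q ^ (-m)) / (q - q⁻¹))
            * ((qc ^ m - qc ^ (-m)) / (q - q⁻¹)) else 0) • K := by
  intro i hi hiN m n _ _
  obtain ⟨j, rfl⟩ : ∃ j, i = j + 1 := ⟨i - 1, by omega⟩
  rw [hoh, haN, smul_sub_smul_lie_smul_sum_smul_succ_add hrel (by omega)]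
  congr 1
  rcases ne_or_eq n (-m) with hnm | rfl
  · simp [hnm]
  rw [if_pos rfl, Int.natAbs_neg, Nat.cast_succ, zpow_mul_zpow_eq_of_eq_sq ht hqt, sub_self,
    mul_zero, zero_sub]
  set C := (q ^ m - q ^ (-m)) / (q - q⁻¹) / m * ((qc ^ m - qc ^ (-m)) / (q - q⁻¹))
  rcases eq_or_ne N (j + 2) with rfl | hN
  · have hshift : q ^ (((j : ℤ) + 1) * m) * q ^ (((j + 2 : ℕ) : ℤ) * -m) = q ^ (-m) := by
      rw [← zpow_add₀ (hqt ▸ pow_ne_zero 2 ht)]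
      congr 1
      push_cast
      ring
    rw [if_pos rfl, if_pos ⟨by omega, rfl⟩]
    linear_combination -(q ^ (((j : ℤ) + 1) * m) * q ^ (((j + 2 : ℕ) : ℤ) * -m) * C) *
        zpow_neg_mul_zpow_self (m.natAbs : ℤ) ht - C * hshift
  · rw [if_neg hN.symm, if_neg (by omega)]
    ring

/-- With `h̄_{im} = q^{im}(q^{|m|/2} ε_{im} - q^{-|m|/2} ε_{i+1,m})` for `1 ≤ i ≤ N-1` and
`a_{Nm}` as in Theorem 4.16, one has
`[h̄_{im}, a_{Nn}] = -δ_{i,N-1} (q^{-m}/m)[m][mc] δ_{m,-n}`. -/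
theorem stmt16 (N : ℕ) (hN : 2 ≤ N) (L : Type*) [LieRing L] [LieAlgebra ℂ L]
    (q t qc : ℂ) (hq0 : q ≠ 0) (ht : t ≠ 0) (hqt : q = t ^ 2)
    (hroot : ∀ k : ℕ, 0 < k → q ^ k ≠ 1)
    (K : L) (hK : ∀ x : L, ⁅K, x⁆ = 0)
    (e : ℕ → ℤ → L)
    (hrel : ∀ (i j : ℕ) (m n : ℤ),
      ⁅e i m, e j n⁆ = (if i = j ∧ n = -m then
          (q ^ m - q ^ (-m)) / (q - q⁻¹) / (m : ℂ)
            * ((qc ^ m - qc ^ (-m)) / (q - q⁻¹)) else 0) • K)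
    (s : ℕ → ℂ) (hs0 : ∀ k, s k ≠ 0)
    (hs : ∀ k : ℕ, s k ^ 2 = ∑ j ∈ Finset.range N, q ^ (2 * j * k))
    (aN : ℤ → L)
    (haN : ∀ m : ℤ, aN m = (q ^ ((N : ℤ) * m) * t ^ (m.natAbs : ℤ)) •
        (((m.sign : ℂ) / s m.natAbs) •
            (∑ k ∈ Finset.range N, q ^ ((k : ℤ) * (m.natAbs : ℤ)) • e (k + 1) m)
          + e N m))
    (oh : ℕ → ℤ → L)
    (hoh : ∀ (i : ℕ) (m : ℤ), oh i m = q ^ ((i : ℤ) * m) •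
        (t ^ (m.natAbs : ℤ) • e i m - t ^ (-(m.natAbs : ℤ)) • e (i + 1) m)) :
    ∀ i : ℕ, 1 ≤ i → i ≤ N - 1 → ∀ m n : ℤ, m ≠ 0 → n ≠ 0 →
      ⁅oh i m, aN n⁆ = (if i = N - 1 ∧ n = -m then
          -(q ^ (-m) / (m : ℂ)) * ((q ^ m - q ^ (-m)) / (q - q⁻¹))
            * ((qc ^ m - qc ^ (-m)) / (q - q⁻¹)) else 0) • K :=
  stmt16_general N L q t qc ht hqt K e hrel s aN haN oh hoh
end
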